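/- If L is an indecomposable almost Abelian Lie algebra with dim [L,L] = 1, then L is isomorphic either to the 2-dimensional non-Abelian Lie algebra ax+b or to the 3-dimensional Heisenberg algebra H_F. -/

import Mathlib

/-!
Choose `e₀` outside the Abelian ideal `I` of codimension one, let `g` be the coordinate along
`e₀` (so `ker g = I`), and let `w` span `[L, L]`, so that `ad e₀ = f ⊗ w` for a functional `f`.
Since `I` is Abelian, `[x, y] = (g x f y - g y f x) w`. Hence every subspace containing `w` is an
ideal and `ker f ∩ ker g` is central, so indecomposability forces `L` to be spanned by `e₀`,
`w` and any `u` with `f u = 1`, `g u = 0`. If `f w ≠ 0` one may take `u ∈ F w`, and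
`((f w)⁻¹ e₀, w)` is a basis of `ax+b`; if `f w = 0`, then `(e₀, w, u)` is a Heisenberg basis.
-/

variable {F : Type*} [Field F] {V : Type*} [AddCommGroup V] [Module F V]

/-- The almost Abelian Lie algebra `F e₀ ⋉ V` determined by the operator `T = ad_{e₀}|_V`:
the underlying vector space is `F × V`, with bracket `[(t,v),(s,w)] = (0, t • T w - s • T v)`. -/
def AA (F V : Type*) [Field F] [AddCommGroup V] [Module F V] (_T : Module.End F V) : Type _ :=
  F × V

namespace AA

variable {T : Module.End F V}

instance : AddCommGroup (AA F V T) := inferInstanceAs (AddCommGroup (F × V))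
instance : Module F (AA F V T) := inferInstanceAs (Module F (F × V))

instance : LieRing (AA F V T) where
  bracket := fun (x y : F × V) => (((0 : F), x.1 • T y.2 - y.1 • T x.2) : F × V)
  add_lie := by
    rintro ⟨a, u⟩ ⟨b, v⟩ ⟨c, w⟩
    show (((0 : F), (a + b) • T w - c • T (u + v)) : F × V)
      = (((0 : F), a • T w - c • T u) : F × V) + (((0 : F), b • T w - c • T v) : F × V)
    ext
    · simp
    · show (a + b) • T w - c • T (u + v) = (a • T w - c • T u) + (b • T w - c • T v)
      simp only [map_add, smul_add, add_smul]
      module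
  lie_add := by
    rintro ⟨a, u⟩ ⟨b, v⟩ ⟨c, w⟩
    show (((0 : F), a • T (v + w) - (b + c) • T u) : F × V)
      = (((0 : F), a • T v - b • T u) : F × V) + (((0 : F), a • T w - c • T u) : F × V)
    ext
    · simp
    · show a • T (v + w) - (b + c) • T u = (a • T v - b • T u) + (a • T w - c • T u)
      simp only [map_add, smul_add, add_smul]
      module
  lie_self := by
    rintro ⟨a, u⟩
    show (((0 : F), a • T u - a • T u) : F × V) = (0 : F × V)
    ext
    · simp
    · show a • T u - a • T u = (0 : V)
      simp
  leibniz_lie := by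
    rintro ⟨a, u⟩ ⟨b, v⟩ ⟨c, w⟩
    show (((0 : F), a • T (b • T w - c • T v) - (0 : F) • T u) : F × V)
      = (((0 : F), (0 : F) • T w - c • T (a • T v - b • T u)) : F × V)
        + (((0 : F), b • T (a • T w - c • T u) - (0 : F) • T v) : F × V)
    ext
    · simp
    · show a • T (b • T w - c • T v) - (0 : F) • T u
        = ((0 : F) • T w - c • T (a • T v - b • T u)) + (b • T (a • T w - c • T u) - (0 : F) • T v)
      simp only [map_sub, map_smul, zero_smul, smul_sub, smul_smul]
      module

instance : LieAlgebra F (AA F V T) where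
  lie_smul := by
    rintro r ⟨a, u⟩ ⟨b, v⟩
    show (((0 : F), a • T (r • v) - (r • b) • T u) : F × V)
      = r • (((0 : F), a • T v - b • T u) : F × V)
    ext
    · simp
    · show a • T (r • v) - (r • b) • T u = r • (a • T v - b • T u)
      simp only [map_smul, smul_sub, smul_smul, smul_eq_mul]
      module

/-- The distinguished element `e₀`. -/
def e0 (T : Module.End F V) : AA F V T := ((1, 0) : F × V)

/-- The inclusion of the Abelian ideal `V` into `F e₀ ⋉ V`. -/
def incl (T : Module.End F V) : V →ₗ[F] AA F V T where
  toFun v := ((0, v) : F × V)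
  map_add' u v := by
    show (((0 : F), u + v) : F × V) = (((0 : F), u) : F × V) + (((0 : F), v) : F × V)
    ext <;> simp
  map_smul' r v := by
    show (((0 : F), r • v) : F × V) = r • (((0 : F), v) : F × V)
    ext <;> simp

@[simp] lemma bracket_e0_incl (v : V) : ⁅e0 T, incl T v⁆ = incl T (T v) := by
  show (((0 : F), (1 : F) • T v - (0 : F) • T (0 : V)) : F × V) = (((0 : F), T v) : F × V)
  ext <;> simp

end AA

/-- A Lie algebra is almost Abelian if it is non-Abelian and possesses an Abelian ideal of
codimension 1 (as an `F`-vector subspace). -/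
def IsAlmostAbelian (F L : Type*) [Field F] [LieRing L] [LieAlgebra F L] : Prop :=
  ¬IsLieAbelian L ∧
    ∃ I : LieIdeal F L, IsLieAbelian I ∧ Module.rank F (L ⧸ I.toSubmodule) = 1

/-- A Lie algebra is indecomposable if it is not the direct sum of two nonzero ideals. -/
def LieIndecomposable (F L : Type*) [Field F] [LieRing L] [LieAlgebra F L] : Prop :=
  ¬∃ (I J : LieIdeal F L), I ≠ ⊥ ∧ J ≠ ⊥ ∧ I ⊓ J = ⊥ ∧ I ⊔ J = ⊤

/-- The operator defining the Heisenberg algebra: `T (a, b) = (b, 0)`. -/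
def heisT (F : Type*) [Field F] : Module.End F (F × F) :=
  (LinearMap.snd F F F).prod 0

/-- The Heisenberg Lie algebra `H_F`, with basis `e₀, e₁ = ((0,(1,0)))`, `e₂ = ((0,(0,1)))` and
relations `[e₀, e₂] = e₁`, `[e₀, e₁] = [e₁, e₂] = 0`. -/
abbrev Heisenberg (F : Type*) [Field F] : Type _ := AA F (F × F) (heisT F)

/-- The 2-dimensional non-Abelian Lie algebra `ax+b`, with `[e₀, e₁] = e₁`. -/
abbrev axb (F : Type*) [Field F] : Type _ := AA F F (1 : Module.End F F)

open Submodule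

theorem LinearMap.exists_eq_smul_of_forall_mem_span_singleton {M N : Type*} [AddCommGroup M]
    [Module F M] [AddCommGroup N] [Module F N] (φ : M →ₗ[F] N) {w : N} (hw : w ≠ 0)
    (h : ∀ x, φ x ∈ span F {w}) : ∃ f : M →ₗ[F] F, ∀ x, φ x = f x • w :=
  ⟨(LinearEquiv.coord F N w hw).toLinearMap ∘ₗ φ.codRestrict _ h,
    fun x => (LinearEquiv.coord_apply_smul F N w hw (φ.codRestrict _ h x)).symm⟩

theorem Submodule.exists_sub_smul_mem_of_rank_quotient_eq_one {I : Submodule F V}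
    (h : Module.rank F (V ⧸ I) = 1) :
    ∃ (e : V) (g : V →ₗ[F] F), g e = 1 ∧ (∀ x ∈ I, g x = 0) ∧ ∀ x, x - g x • e ∈ I := by
  obtain ⟨ι⟩ := Module.nonempty_linearEquiv_iff_rank_eq_one.mpr h
  obtain ⟨e, he⟩ := I.mkQ_surjective (ι 1)
  refine ⟨e, ι.symm ∘ₗ I.mkQ, by simp [he], fun x hx => ?_, fun x => ?_⟩
  · simp [(Quotient.mk_eq_zero I).mpr hx]
  · rw [← Quotient.mk_eq_zero, ← mkQ_apply, map_sub, map_smul, he, LinearMap.comp_apply,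
      LinearEquiv.coe_coe, ← ι.map_smul, smul_eq_mul, mul_one, ι.apply_symm_apply, sub_self]

section LieAlgebra

variable {L : Type*} [LieRing L] [LieAlgebra F L]

theorem lie_mem_of_forall_sub_smul_mem {I : LieIdeal F L} {e₀ : L} {g : L →ₗ[F] F}
    (hg : ∀ x, x - g x • e₀ ∈ I) (x y : L) : ⁅x, y⁆ ∈ I := by
  have hxy : ⁅x, y⁆ = g x • ⁅e₀, y - g y • e₀⁆ - g y • ⁅e₀, x - g x • e₀⁆
      + ⁅x - g x • e₀, y - g y • e₀⁆ := by
    simp only [sub_lie, lie_sub, smul_lie, lie_smul, lie_self, smul_zero, sub_zero]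
    rw [← lie_skew x e₀]
    module
  rw [hxy]
  exact add_mem (sub_mem (I.smul_mem _ (I.lie_mem (hg y))) (I.smul_mem _ (I.lie_mem (hg x))))
    (I.lie_mem (hg y))

theorem lie_eq_smul_sub_smul_of_isLieAbelian {I : LieIdeal F L} [IsLieAbelian I] {e₀ : L}
    {g : L →ₗ[F] F} (hg : ∀ x, x - g x • e₀ ∈ I) (x y : L) :
    ⁅x, y⁆ = g x • ⁅e₀, y⁆ - g y • ⁅e₀, x⁆ := by
  have hxy : ⁅x - g x • e₀, y - g y • e₀⁆ = 0 :=
    congrArg Subtype.val (trivial_lie_zero I I ⟨_, hg x⟩ ⟨_, hg y⟩)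
  simp only [sub_lie, lie_sub, smul_lie, lie_smul, lie_self, smul_zero, sub_zero] at hxy
  rw [← lie_skew x e₀] at hxy
  linear_combination (norm := module) hxy

theorem LieIndecomposable.eq_top_of_sup_center_eq_top (hind : LieIndecomposable F L)
    {S : Submodule F L} (hS : S ≠ ⊥) (hder : ∀ x y : L, ⁅x, y⁆ ∈ S)
    (hsup : S ⊔ (LieAlgebra.center F L).toSubmodule = ⊤) : S = ⊤ := by
  set Z := (LieAlgebra.center F L).toSubmodule
  -- a complement of `S ⊓ Z` inside `Z` is a central ideal complementing the ideal `S`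
  obtain ⟨C', hC'⟩ := Submodule.exists_isCompl (S ⊓ Z)
  let SI : LieIdeal F L := { S with lie_mem := fun _ => hder _ _ }
  let CI : LieIdeal F L :=
    { C' ⊓ Z with
      lie_mem := fun {x m} hm => by
        rw [(LieModule.mem_maxTrivSubmodule F L L m).mp hm.2 x]
        exact (C' ⊓ Z).zero_mem }
  have hZ : S ⊓ Z ⊔ C' ⊓ Z = Z := by
    rw [← sup_inf_assoc_of_le _ inf_le_right, hC'.sup_eq_top, top_inf_eq]
  have hCI : CI = ⊥ := by
    by_contra hC
    refine hind ⟨SI, CI, fun h => hS (congrArg LieSubmodule.toSubmodule h), hC, ?_, ?_⟩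
    · rw [← LieSubmodule.toSubmodule_inj]
      show S ⊓ (C' ⊓ Z) = ⊥
      rw [inf_comm C', ← inf_assoc, hC'.inf_eq_bot]
    · rw [← LieSubmodule.toSubmodule_inj]
      show S ⊔ C' ⊓ Z = ⊤
      rw [← hsup]
      conv_rhs => rw [← hZ, ← sup_assoc, sup_inf_self]
  have hC : C' ⊓ Z = ⊥ := congrArg LieSubmodule.toSubmodule hCI
  rw [hC, sup_bot_eq] at hZ
  rwa [sup_eq_left.mpr (inf_eq_right.mp hZ)] at hsup

end LieAlgebra

namespace AA

variable {L : Type*} [LieRing L] [LieAlgebra F L] {T : Module.End F V}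

def lift (e : L) (φ : V →ₗ[F] L) (hφ : ∀ v v', ⁅φ v, φ v'⁆ = 0)
    (he : ∀ v, ⁅e, φ v⁆ = φ (T v)) : AA F V T →ₗ⁅F⁆ L :=
  { ((LinearMap.toSpanSingleton F L e).coprod φ : F × V →ₗ[F] L) with
    map_lie' := by
      rintro ⟨t, v⟩ ⟨s, v'⟩
      show (0 : F) • e + φ (t • T v' - s • T v) = ⁅t • e + φ v, s • e + φ v'⁆
      have hve : ⁅φ v, e⁆ = -φ (T v) := by rw [← lie_skew, he]
      simp only [add_lie, lie_add, smul_lie, lie_smul, lie_self, he, hve, hφ, map_sub, map_smul]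
      module }

variable {e : L} {φ : V →ₗ[F] L} {hφ : ∀ v v', ⁅φ v, φ v'⁆ = 0} {he : ∀ v, ⁅e, φ v⁆ = φ (T v)}

theorem lift_apply (t : F) (v : V) : lift e φ hφ he ((t, v) : F × V) = t • e + φ v := rfl

theorem lift_injective (hφi : Function.Injective φ) (he' : e ∉ LinearMap.range φ) :
    Function.Injective (lift e φ hφ he) := by
  refine (injective_iff_map_eq_zero _).mpr fun ⟨t, v⟩ h => ?_
  rw [lift_apply] at h
  obtain rfl : t = 0 := by
    by_contra ht
    refine he' ⟨-t⁻¹ • v, ?_⟩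
    rw [map_smul, eq_neg_of_add_eq_zero_right h]
    simp [smul_smul, ht]
  rw [zero_smul, zero_add, ← map_zero φ] at h
  rw [hφi h]
  rfl

theorem lift_surjective (hspan : span F {e} ⊔ LinearMap.range φ = ⊤) :
    Function.Surjective (lift e φ hφ he) := by
  rw [← LinearMap.range_toSpanSingleton, ← LinearMap.range_coprod] at hspan
  exact LinearMap.range_eq_top.mp hspan

end AA

section BracketByFunctionals

variable {L : Type*} [LieRing L] [LieAlgebra F L] {e₀ u w : L} {f g : L →ₗ[F] F}

theorem mem_center_of_apply_eq_zero (key : ∀ x y : L, ⁅x, y⁆ = (g x * f y - g y * f x) • w)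
    {z : L} (hfz : f z = 0) (hgz : g z = 0) : z ∈ LieAlgebra.center F L :=
  (LieModule.mem_maxTrivSubmodule F L L z).mpr fun x => by simp [key, hfz, hgz]

theorem exists_apply_eq_one_apply_eq_zero
    (key : ∀ x y : L, ⁅x, y⁆ = (g x * f y - g y * f x) • w) (hL : ¬IsLieAbelian L)
    (hge₀ : g e₀ = 1) (hfe₀ : f e₀ = 0) : ∃ u, f u = 1 ∧ g u = 0 := by
  obtain ⟨x, hx⟩ : ∃ x, f x ≠ 0 := by
    by_contra! hf
    exact hL ⟨fun x y => by simp [key, hf]⟩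
  exact ⟨(f x)⁻¹ • (x - g x • e₀), by simp [hfe₀, hx], by simp [hge₀]⟩

theorem LieIndecomposable.eq_top_of_lie_eq_smul
    (hind : LieIndecomposable F L) (key : ∀ x y : L, ⁅x, y⁆ = (g x * f y - g y * f x) • w)
    (hge₀ : g e₀ = 1) (hfe₀ : f e₀ = 0) (hfu : f u = 1) (hgu : g u = 0) (hw : w ≠ 0)
    {S : Submodule F L} (he₀ : e₀ ∈ S) (hu : u ∈ S) (hwS : w ∈ S) : S = ⊤ := by
  refine hind.eq_top_of_sup_center_eq_top (fun h => hw (by simpa [h] using hwS))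
    (fun x y => key x y ▸ S.smul_mem _ hwS) (eq_top_iff'.mpr fun x => mem_sup.mpr ?_)
  refine ⟨g x • e₀ + f x • u, add_mem (S.smul_mem _ he₀) (S.smul_mem _ hu),
    x - (g x • e₀ + f x • u), mem_center_of_apply_eq_zero key ?_ ?_, add_sub_cancel _ _⟩
  · simp [hfe₀, hfu]
  · simp [hge₀, hgu]

theorem nonempty_lieEquiv_heisenberg (key : ∀ x y : L, ⁅x, y⁆ = (g x * f y - g y * f x) • w)
    (hge₀ : g e₀ = 1) (hfu : f u = 1) (hgu : g u = 0) (hfw : f w = 0) (hgw : g w = 0)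
    (hw : w ≠ 0) (hspan : span F {e₀, w, u} = ⊤) : Nonempty (L ≃ₗ⁅F⁆ Heisenberg F) := by
  let φ := (LinearMap.toSpanSingleton F L w).coprod (LinearMap.toSpanSingleton F L u)
  have hφ : ∀ v : F × F, φ v = v.1 • w + v.2 • u := fun _ => rfl
  have hgφ : ∀ v, g (φ v) = 0 := fun v => by simp [hφ, hgw, hgu]
  have hφφ : ∀ v v', ⁅φ v, φ v'⁆ = 0 := fun v v' => by simp [key, hgφ]
  have he₀φ : ∀ v, ⁅e₀, φ v⁆ = φ (heisT F v) := fun v => by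
    simp [key, hge₀, hφ, hfu, hfw, hgw, hgu, heisT]
  refine ⟨(LieEquiv.ofBijective (AA.lift e₀ φ hφφ he₀φ)
    ⟨AA.lift_injective ?_ ?_, AA.lift_surjective ?_⟩).symm⟩
  · refine (injective_iff_map_eq_zero _).mpr fun ⟨b, c⟩ h => ?_
    rw [hφ] at h
    obtain rfl : c = 0 := by simpa [hfw, hfu] using congrArg f h
    obtain rfl : b = 0 := by simpa [hw] using h
    rfl
  · rintro ⟨v, hv⟩
    simpa [hge₀, hgφ] using congrArg g hv
  · rwa [LinearMap.range_coprod, LinearMap.range_toSpanSingleton,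
      LinearMap.range_toSpanSingleton, ← span_insert, ← span_insert]

theorem nonempty_lieEquiv_axb (key : ∀ x y : L, ⁅x, y⁆ = (g x * f y - g y * f x) • w)
    (hge₀ : g e₀ = 1) (hgw : g w = 0) (hfw : f w ≠ 0) (hspan : span F {e₀, w} = ⊤) :
    Nonempty (L ≃ₗ⁅F⁆ axb F) := by
  let φ := LinearMap.toSpanSingleton F L w
  have hφφ : ∀ a b, ⁅φ a, φ b⁆ = 0 := fun a b => by simp [φ]
  have heφ : ∀ a, ⁅(f w)⁻¹ • e₀, φ a⁆ = φ ((1 : Module.End F F) a) := fun a => by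
    simp [φ, key, hge₀, hgw, mul_left_comm _ a, inv_mul_cancel₀ hfw]
  refine ⟨(LieEquiv.ofBijective (AA.lift _ φ hφφ heφ)
    ⟨AA.lift_injective ?_ ?_, AA.lift_surjective ?_⟩).symm⟩
  · exact smul_left_injective F fun h => hfw (by simp [h])
  · rintro ⟨a, ha⟩
    exact hfw (by simpa [φ, hge₀, hgw] using (congrArg g ha).symm)
  · rwa [LinearMap.range_toSpanSingleton, span_singleton_smul_eq (inv_ne_zero hfw).isUnit,
      ← span_insert]

end BracketByFunctionals

/-- An indecomposable almost Abelian Lie algebra with 1-dimensional derived algebra `[L,L]` is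
isomorphic either to `ax+b` or to the Heisenberg algebra. -/
theorem stmt17 (F L : Type*) [Field F] [LieRing L] [LieAlgebra F L]
    (hL : IsAlmostAbelian F L) (hind : LieIndecomposable F L)
    (hdim : Module.rank F (⁅(⊤ : LieIdeal F L), (⊤ : LieIdeal F L)⁆ : LieIdeal F L) = 1) :
    Nonempty (L ≃ₗ⁅F⁆ axb F) ∨ Nonempty (L ≃ₗ⁅F⁆ Heisenberg F) := by
  obtain ⟨hnab, I, hIab, hIrank⟩ := hL
  obtain ⟨e₀, g, hge₀, hgI, hIg⟩ := exists_sub_smul_mem_of_rank_quotient_eq_one hIrank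
  obtain ⟨w, hwD, hw, hDw⟩ := (rank_submodule_eq_one_iff _).mp hdim
  obtain ⟨f, hf⟩ := (LieAlgebra.ad F L e₀).exists_eq_smul_of_forall_mem_span_singleton hw
    fun x => hDw (LieSubmodule.lie_mem_lie (LieSubmodule.mem_top e₀) (LieSubmodule.mem_top x))
  have key : ∀ x y : L, ⁅x, y⁆ = (g x * f y - g y * f x) • w := fun x y => by
    rw [lie_eq_smul_sub_smul_of_isLieAbelian hIg, ← LieAlgebra.ad_apply F,
      ← LieAlgebra.ad_apply F, hf, hf]
    module
  have hgw : g w = 0 := hgI w <| (LieSubmodule.lie_le_iff _ _ _).mpr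
    (fun x _ y _ => lie_mem_of_forall_sub_smul_mem hIg x y) hwD
  have hfe₀ : f e₀ = 0 := (smul_eq_zero.mp ((hf e₀).symm.trans (lie_self e₀))).resolve_right hw
  rcases eq_or_ne (f w) 0 with hfw | hfw
  · obtain ⟨u, hfu, hgu⟩ := exists_apply_eq_one_apply_eq_zero key hnab hge₀ hfe₀
    refine Or.inr (nonempty_lieEquiv_heisenberg key hge₀ hfu hgu hfw hgw hw ?_)
    exact hind.eq_top_of_lie_eq_smul key hge₀ hfe₀ hfu hgu hw (subset_span (by simp))
      (subset_span (by simp)) (subset_span (by simp))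
  · refine Or.inl (nonempty_lieEquiv_axb key hge₀ hgw hfw ?_)
    exact hind.eq_top_of_lie_eq_smul key hge₀ hfe₀ (u := (f w)⁻¹ • w) (by simp [hfw])
      (by simp [hgw]) hw (subset_span (by simp)) (smul_mem _ _ (subset_span (by simp)))
      (subset_span (by simp))
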